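/- Let (K, δ) be a differential field and P a prime differential ideal of K{x}. If there is an irreducible f ∈ P of minimal rank in P whose separant s_f is nonzero, then P = [f] : s_f^∞. -/

import Mathlib

set_option synthInstance.maxHeartbeats 1000000
set_option maxHeartbeats 1000000

open MvPolynomial
noncomputable section
variable {K : Type*} [Field K]

/-- order of a differential polynomial -/
def ordOf (f : MvPolynomial ℕ K) : ℕ := f.vars.sup id

/-- separant -/
def sep (f : MvPolynomial ℕ K) : MvPolynomial ℕ K := pderiv (ordOf f) f

/-- rank of a differential polynomial -/
def rankOf (f : MvPolynomial ℕ K) : ℕ × ℕ := (ordOf f, f.degreeOf (ordOf f))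

/-- the differential ideal generated by f -/
def diffIdeal (D : Derivation ℤ (MvPolynomial ℕ K) (MvPolynomial ℕ K))
    (f : MvPolynomial ℕ K) : Ideal (MvPolynomial ℕ K) :=
  Ideal.span (Set.range fun n : ℕ => (⇑D)^[n] f)

/-- saturation I : s^∞ -/
def saturation {R : Type*} [CommRing R] (J : Ideal R) (s : R) : Ideal R where
  carrier := {h | ∃ m : ℕ, s ^ m * h ∈ J}
  zero_mem' := ⟨0, by simp⟩
  add_mem' := by
    rintro a b ⟨m, hm⟩ ⟨n, hn⟩
    refine ⟨m + n, ?_⟩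
    have h : s ^ (m + n) * (a + b) = s ^ n * (s ^ m * a) + s ^ m * (s ^ n * b) := by ring
    rw [h]
    exact J.add_mem (J.mul_mem_left _ hm) (J.mul_mem_left _ hn)
  smul_mem' := by
    rintro c a ⟨m, hm⟩
    refine ⟨m, ?_⟩
    have h : s ^ m * (c • a) = c * (s ^ m * a) := by rw [smul_eq_mul]; ring
    rw [h]
    exact J.mul_mem_left _ hm

/-- evaluation of a differential polynomial at a point of K -/
def evalD (δ : Derivation ℤ K K) (a : K) (f : MvPolynomial ℕ K) : K :=
  MvPolynomial.eval (fun n => (⇑δ)^[n] a) f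

/-- the field of constants -/
def constants (δ : Derivation ℤ K K) : Subfield K where
  carrier := {a | δ a = 0}
  zero_mem' := by simp
  one_mem' := by simp
  add_mem' := by intro a b ha hb; simp only [Set.mem_setOf_eq] at *; rw [map_add, ha, hb, add_zero]
  mul_mem' := by
    intro a b ha hb; simp only [Set.mem_setOf_eq] at *
    rw [Derivation.leibniz, ha, hb]; simp
  neg_mem' := by intro a ha; simp only [Set.mem_setOf_eq] at *; rw [map_neg, ha, neg_zero]
  inv_mem' := by
    intro a ha
    simp only [Set.mem_setOf_eq] at *
    rcases eq_or_ne a 0 with rfl | h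
    · simp
    · have h1 : a * a⁻¹ = 1 := mul_inv_cancel₀ h
      have h2 : δ (a * a⁻¹) = 0 := by rw [h1]; exact δ.map_one_eq_zero
      rw [Derivation.leibniz, ha] at h2
      simp only [smul_eq_mul, mul_zero, add_zero, zero_mul, smul_zero] at h2
      exact (mul_eq_zero.mp h2).resolve_left h

/-- the SDCF axiom scheme -/
def SDCFAx (δ : Derivation ℤ K K) : Prop :=
  ∀ f g : MvPolynomial ℕ K, f ≠ 0 → g ≠ 0 → sep f ≠ 0 → ordOf g < ordOf f →
    ∃ a : K, evalD δ a f = 0 ∧ evalD δ a g ≠ 0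
/-!
Let `p` be the order of `f`. The derivative `D^[k+1] f` is linear in `X (p+k+1)` with leading
coefficient `s_f`, so pseudo-dividing `h ∈ P` successively by the derivatives of `f` gives
`s_f^m h ≡ r mod [f]` with `r` of order at most `p`. Then `r ∈ P`, and pseudo-division of `r` by
`f` in `X p` leaves a remainder in `P` of lower rank than `f`, hence zero: `f ∣ I^k r` for the
initial `I` of `f`. Minimality also gives `I ∉ P` and `s_f ∉ P`; the first makes the prime `f`
divide `r`, so `h ∈ [f] : s_f^∞`, and the second gives the reverse inclusion since `P` is prime.
-/

namespace MvPolynomial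

variable {R σ : Type*} [CommRing R] {s : Set σ} {v : σ} {g : MvPolynomial σ R}

theorem X_mem_supported_of_mem {i : σ} (hi : i ∈ s) : (X i : MvPolynomial σ R) ∈ supported R s :=
  Algebra.subset_adjoin (Set.mem_image_of_mem X hi)

theorem C_mem_supported (r : R) : (C r : MvPolynomial σ R) ∈ supported R s :=
  (supported R s).algebraMap_mem r

theorem degreeOf_eq_zero_of_mem_supported (hg : g ∈ supported R s) (hv : v ∉ s) :
    degreeOf v g = 0 := by
  by_contra h
  exact hv (mem_supported.1 hg (mem_vars_iff_degreeOf_ne_zero.2 h))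

theorem mem_supported_of_degreeOf_eq_zero (hg : g ∈ supported R (insert v s))
    (hv : degreeOf v g = 0) : g ∈ supported R s := by
  refine mem_supported.2 fun i hi => ?_
  have hiv : i ≠ v := by
    rintro rfl
    exact mem_vars_iff_degreeOf_ne_zero.1 hi hv
  exact (mem_supported.1 hg hi).resolve_left hiv

theorem pderiv_mem_supported (i : σ) (hg : g ∈ supported R s) : pderiv i g ∈ supported R s := by
  induction hg using Algebra.adjoin_induction with
  | mem x hx =>
    obtain ⟨j, -, rfl⟩ := hx
    obtain rfl | hij := eq_or_ne i j
    · rw [pderiv_X_self]; exact one_mem _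
    · rw [pderiv_X_of_ne hij.symm]; exact zero_mem _
  | algebraMap r => rw [algebraMap_eq, pderiv_C]; exact zero_mem _
  | add x y _ _ hx hy => rw [map_add]; exact add_mem hx hy
  | mul x y hx' hy' hx hy =>
    rw [Derivation.leibniz, smul_eq_mul, smul_eq_mul]
    exact add_mem (mul_mem hx' hy) (mul_mem hy' hx)

theorem degreeOf_pderiv_lt (h : 0 < degreeOf v g) : degreeOf v (pderiv v g) < degreeOf v g := by
  refine (degreeOf_lt_iff h).2 fun m hm => ?_
  rw [mem_support_iff, coeff_pderiv] at hm
  have hle := monomial_le_degreeOf v (mem_support_iff.2 (left_ne_zero_of_mul hm))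
  simp only [Finsupp.add_apply, Finsupp.single_eq_same] at hle
  omega

theorem mem_supported_of_degreeOf_le {p q : MvPolynomial σ R}
    (h : ∀ i, degreeOf i p ≤ degreeOf i q) (hq : q ∈ supported R s) : p ∈ supported R s :=
  mem_supported.2 fun i hi => mem_supported.1 hq <| mem_vars_iff_degreeOf_ne_zero.2
    fun hq => mem_vars_iff_degreeOf_ne_zero.1 hi (Nat.eq_zero_of_le_zero (hq ▸ h i))

theorem degreeOf_divMonomial_le (g : MvPolynomial σ R) (m : σ →₀ ℕ) (i : σ) :
    degreeOf i (g.divMonomial m) ≤ degreeOf i g - m i := by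
  refine degreeOf_le_iff.2 fun n hn => ?_
  rw [mem_support_iff, coeff_divMonomial] at hn
  have hle := monomial_le_degreeOf i (mem_support_iff.2 hn)
  rw [Finsupp.add_apply] at hle
  omega

theorem degreeOf_modMonomial_le (g : MvPolynomial σ R) (m : σ →₀ ℕ) (i : σ) :
    degreeOf i (g.modMonomial m) ≤ degreeOf i g := by
  refine degreeOf_le_iff.2 fun n hn => monomial_le_degreeOf i (mem_support_iff.2 fun h0 => ?_)
  rw [mem_support_iff] at hn
  by_cases hmn : m ≤ n
  · exact hn (coeff_modMonomial_of_le _ hmn)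
  · exact hn (by rw [coeff_modMonomial_of_not_le _ hmn, h0])

theorem degreeOf_modMonomial_single_lt (g : MvPolynomial σ R) (v : σ) {d : ℕ} (hd : 0 < d) :
    degreeOf v (g.modMonomial (Finsupp.single v d)) < d := by
  refine (degreeOf_lt_iff hd).2 fun m hm => ?_
  by_contra! hdm
  rw [mem_support_iff, coeff_modMonomial_of_le _ (Finsupp.single_le_iff.2 hdm)] at hm
  exact hm rfl

theorem exists_eq_X_pow_mul_add (hg : g ∈ supported R s) (v : σ) {d : ℕ} (hd : 0 < d) :
    ∃ c g', g = X v ^ d * c + g' ∧ degreeOf v c ≤ degreeOf v g - d ∧ degreeOf v g' < d ∧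
      c ∈ supported R s ∧ g' ∈ supported R s :=
  ⟨_, _, by rw [X_pow_eq_monomial, divMonomial_add_modMonomial],
    by simpa using degreeOf_divMonomial_le g (Finsupp.single v d) v,
    degreeOf_modMonomial_single_lt g v hd,
    mem_supported_of_degreeOf_le
      (fun i => (degreeOf_divMonomial_le g _ i).trans (Nat.sub_le _ _)) hg,
    mem_supported_of_degreeOf_le (degreeOf_modMonomial_le g _) hg⟩

theorem exists_pow_mul_eq_mul_add {a b h : MvPolynomial σ R} {d : ℕ}
    (ha : degreeOf v a = 0) (hb : degreeOf v b < d)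
    (has : a ∈ supported R s) (hbs : b ∈ supported R s) (hhs : h ∈ supported R s) :
    ∃ (k : ℕ) (q r : MvPolynomial σ R), a ^ k * h = q * (X v ^ d * a + b) + r ∧
      degreeOf v r < d ∧ r ∈ supported R s := by
  induction hn : degreeOf v h using Nat.strong_induction_on generalizing h with
  | _ e ih =>
  by_cases hed : e < d
  · exact ⟨0, 0, h, by ring, hn ▸ hed, hhs⟩
  obtain ⟨c, h', rfl, hc, hh', hcs, hh's⟩ := exists_eq_X_pow_mul_add hhs v (d := d) (by omega)
  -- `a * (X v ^ d * c + h') = c * (X v ^ d * a + b) + (a * h' - c * b)`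
  have hlt : degreeOf v (a * h' - c * b) < e := by
    refine (degreeOf_sub_le v _ _).trans_lt (max_lt ?_ ?_)
    · exact (degreeOf_mul_le v a h').trans_lt (by omega)
    · exact (degreeOf_mul_le v c b).trans_lt (by omega)
  obtain ⟨k, q, r, hqr, hr, hrs⟩ :=
    ih _ hlt (sub_mem (mul_mem has hh's) (mul_mem hcs hbs)) rfl
  exact ⟨k + 1, a ^ k * c + q, r, by linear_combination hqr, hr, hrs⟩

end MvPolynomial

open Set

/-- `D` is the derivation of `K{x} = K[x, x', x'', …]` extending `δ`, with `X n` standing for the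
`n`-th derivative of `x`. -/
structure IsDiffPolyDerivation {R : Type*} [CommRing R] (δ : Derivation ℤ R R)
    (D : Derivation ℤ (MvPolynomial ℕ R) (MvPolynomial ℕ R)) : Prop where
  map_X : ∀ n, D (X n) = X (n + 1)
  map_C : ∀ a, D (C a) = C (δ a)

namespace IsDiffPolyDerivation

variable {R : Type*} [CommRing R] {δ : Derivation ℤ R R}
  {D : Derivation ℤ (MvPolynomial ℕ R) (MvPolynomial ℕ R)} {g : MvPolynomial ℕ R}

theorem map_mem_supported_Iic (hD : IsDiffPolyDerivation δ D) {n : ℕ}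
    (hg : g ∈ supported R (Iic n)) : D g ∈ supported R (Iic (n + 1)) := by
  have hmono := supported_mono (R := R) (Iic_subset_Iic.2 n.le_succ)
  induction hg using Algebra.adjoin_induction with
  | mem x hx =>
    obtain ⟨j, hj, rfl⟩ := hx
    rw [hD.map_X]
    exact X_mem_supported_of_mem (Nat.succ_le_succ hj)
  | algebraMap r => rw [algebraMap_eq, hD.map_C]; exact C_mem_supported _
  | add x y _ _ hx hy => rw [map_add]; exact add_mem hx hy
  | mul x y hx' hy' hx hy =>
    rw [Derivation.leibniz, smul_eq_mul, smul_eq_mul]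
    exact add_mem (mul_mem (hmono hx') hy) (mul_mem (hmono hy') hx)

theorem map_sub_pderiv_mul_X_mem_supported (hD : IsDiffPolyDerivation δ D) {p : ℕ}
    (hg : g ∈ supported R (Iic p)) : D g - pderiv p g * X (p + 1) ∈ supported R (Iic p) := by
  induction hg using Algebra.adjoin_induction with
  | mem x hx =>
    obtain ⟨j, hj, rfl⟩ := hx
    rw [hD.map_X]
    obtain rfl | hjp := eq_or_ne j p
    · rw [pderiv_X_self, one_mul, sub_self]; exact zero_mem _
    · rw [pderiv_X_of_ne hjp, zero_mul, sub_zero]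
      exact X_mem_supported_of_mem (Nat.succ_le_of_lt (lt_of_le_of_ne hj hjp))
  | algebraMap r =>
    rw [algebraMap_eq, hD.map_C, pderiv_C, zero_mul, sub_zero]; exact C_mem_supported _
  | add x y _ _ hx hy =>
    rw [map_add, map_add, add_mul, add_sub_add_comm]; exact add_mem hx hy
  | mul x y hx' hy' hx hy =>
    have h : D (x * y) - pderiv p (x * y) * X (p + 1) =
        x * (D y - pderiv p y * X (p + 1)) + y * (D x - pderiv p x * X (p + 1)) := by
      simp only [Derivation.leibniz, smul_eq_mul]; ring
    rw [h]
    exact add_mem (mul_mem hx' hy) (mul_mem hy' hx)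

theorem iterate_succ_eq_pderiv_mul_X_add (hD : IsDiffPolyDerivation δ D) {f : MvPolynomial ℕ R}
    {p : ℕ} (hf : f ∈ supported R (Iic p)) (i : ℕ) :
    ∃ E ∈ supported R (Iic (p + i)), D^[i + 1] f = pderiv p f * X (p + i + 1) + E := by
  induction i with
  | zero => exact ⟨_, hD.map_sub_pderiv_mul_X_mem_supported hf, by simp⟩
  | succ i ih =>
    obtain ⟨E, hE, hfE⟩ := ih
    have hs : D (pderiv p f) ∈ supported R (Iic (p + 1)) :=
      hD.map_mem_supported_Iic (pderiv_mem_supported p hf)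
    refine ⟨D (pderiv p f) * X (p + i + 1) + D E, add_mem (mul_mem ?_ ?_) ?_, ?_⟩
    · exact supported_mono (Iic_subset_Iic.2 (by omega)) hs
    · exact X_mem_supported_of_mem (by rw [mem_Iic]; omega)
    · exact hD.map_mem_supported_Iic hE
    · rw [Function.iterate_succ_apply', hfE, map_add, Derivation.leibniz, hD.map_X, smul_eq_mul,
        smul_eq_mul, ← add_assoc p]
      ring

end IsDiffPolyDerivation

theorem IsDiffPolyDerivation.exists_pow_pderiv_mul_sub_mem_diffIdeal {δ : Derivation ℤ K K}
    {D : Derivation ℤ (MvPolynomial ℕ K) (MvPolynomial ℕ K)} (hD : IsDiffPolyDerivation δ D)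
    {f : MvPolynomial ℕ K} {p : ℕ} (hf : f ∈ supported K (Iic p)) (k : ℕ) {h : MvPolynomial ℕ K}
    (hh : h ∈ supported K (Iic (p + k))) :
    ∃ (m : ℕ) (r : MvPolynomial ℕ K), r ∈ supported K (Iic p) ∧
      pderiv p f ^ m * h - r ∈ diffIdeal D f := by
  induction k generalizing h with
  | zero => exact ⟨0, h, hh, by simp⟩
  | succ k ih =>
    obtain ⟨E, hE, hfE⟩ := hD.iterate_succ_eq_pderiv_mul_X_add hf k
    have hv : p + k + 1 ∉ Iic (p + k) := by simp
    have hs : pderiv p f ∈ supported K (Iic (p + k)) :=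
      supported_mono (Iic_subset_Iic.2 (Nat.le_add_right p k)) (pderiv_mem_supported p hf)
    obtain ⟨k₁, q, r₁, hqr, hr₁, hr₁s⟩ :=
      exists_pow_mul_eq_mul_add (s := Iic (p + k + 1)) (v := p + k + 1) (d := 1)
      (degreeOf_eq_zero_of_mem_supported hs hv)
      (by rw [degreeOf_eq_zero_of_mem_supported hE hv]; exact one_pos)
      (supported_mono (Iic_subset_Iic.2 (Nat.le_succ _)) hs)
      (supported_mono (Iic_subset_Iic.2 (Nat.le_succ _)) hE) hh
    rw [show Iic (p + k + 1) = insert (p + k + 1) (Iic (p + k)) from Order.Iic_succ _] at hr₁s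
    obtain ⟨m, r, hr, hmem⟩ := ih (mem_supported_of_degreeOf_eq_zero hr₁s (by omega))
    refine ⟨m + k₁, r, hr, ?_⟩
    have hsplit : pderiv p f ^ (m + k₁) * h - r =
        pderiv p f ^ m * q * D^[k + 1] f + (pderiv p f ^ m * r₁ - r) := by
      rw [hfE]; linear_combination pderiv p f ^ m * hqr
    rw [hsplit]
    exact add_mem (Ideal.mul_mem_left _ _ (Ideal.subset_span ⟨k + 1, rfl⟩)) hmem

theorem mem_supported_Iic_ordOf (f : MvPolynomial ℕ K) : f ∈ supported K (Iic (ordOf f)) :=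
  mem_supported.2 fun _ hn => Finset.le_sup (f := id) hn

theorem toLex_rankOf_lt {g : MvPolynomial ℕ K} {p d : ℕ} (hg : g ∈ supported K (Iic p))
    (hd : degreeOf p g < d) : toLex (rankOf g) < toLex (p, d) := by
  have hord : ordOf g ≤ p := Finset.sup_le fun _ hn => mem_supported.1 hg hn
  rcases hord.lt_or_eq with hlt | rfl
  · exact Prod.Lex.lt_iff.2 (Or.inl hlt)
  · exact Prod.Lex.lt_iff.2 (Or.inr ⟨rfl, hd⟩)

theorem mem_diffIdeal_self (D : Derivation ℤ (MvPolynomial ℕ K) (MvPolynomial ℕ K))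
    (f : MvPolynomial ℕ K) : f ∈ diffIdeal D f :=
  Ideal.subset_span ⟨0, rfl⟩

theorem diffIdeal_le {D : Derivation ℤ (MvPolynomial ℕ K) (MvPolynomial ℕ K)}
    {P : Ideal (MvPolynomial ℕ K)} (hP : ∀ h ∈ P, D h ∈ P) {f : MvPolynomial ℕ K} (hf : f ∈ P) :
    diffIdeal D f ≤ P := by
  rw [diffIdeal, Ideal.span_le]
  rintro _ ⟨n, rfl⟩
  induction n with
  | zero => exact hf
  | succ n ih =>
    show (⇑D)^[n + 1] f ∈ P
    rw [Function.iterate_succ_apply']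
    exact hP _ ih

theorem saturation_le_of_isPrime {R : Type*} [CommRing R] {J P : Ideal R} {s : R}
    (hJP : J ≤ P) (hP : P.IsPrime) (hs : s ∉ P) : saturation J s ≤ P := by
  rintro h ⟨m, hm⟩
  exact (hP.mem_or_mem (hJP hm)).resolve_left fun hsm => hs (hP.mem_of_pow_mem m hsm)

theorem eq_zero_of_mem_of_degreeOf_lt {P : Ideal (MvPolynomial ℕ K)} {f g : MvPolynomial ℕ K}
    (hmin : ∀ g ∈ P, g ≠ 0 → toLex (rankOf f) ≤ toLex (rankOf g)) (hgP : g ∈ P)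
    (hg : g ∈ supported K (Iic (ordOf f))) (hd : degreeOf (ordOf f) g < degreeOf (ordOf f) f) :
    g = 0 := by
  by_contra hg0
  exact (hmin g hgP hg0).not_gt (toLex_rankOf_lt hg hd)

theorem dvd_of_mem_of_mem_supported_Iic_ordOf {P : Ideal (MvPolynomial ℕ K)}
    {f r : MvPolynomial ℕ K} (hfP : f ∈ P) (hf : Prime f)
    (hmin : ∀ g ∈ P, g ≠ 0 → toLex (rankOf f) ≤ toLex (rankOf g))
    (hd : 0 < degreeOf (ordOf f) f) (hrP : r ∈ P) (hr : r ∈ supported K (Iic (ordOf f))) :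
    f ∣ r := by
  obtain ⟨I, F, hfIF, hI, hF, hIs, hFs⟩ :=
    exists_eq_X_pow_mul_add (mem_supported_Iic_ordOf f) (ordOf f) hd
  obtain ⟨k, q, r', hqr, hr', hr's⟩ := exists_pow_mul_eq_mul_add (by omega) hF hIs hFs hr
  rw [← hfIF] at hqr
  have hr'P : r' ∈ P := by
    rw [show r' = I ^ k * r - q * f by linear_combination -hqr]
    exact P.sub_mem (P.mul_mem_left _ hrP) (P.mul_mem_left _ hfP)
  have hIP : I ∉ P := by
    intro hIP
    have hI0 := eq_zero_of_mem_of_degreeOf_lt hmin hIP hIs (by omega)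
    rw [hI0, mul_zero, zero_add] at hfIF
    exact hF.ne (congrArg (degreeOf (ordOf f)) hfIF.symm)
  have hfIr : f ∣ I ^ k * r := by
    rw [hqr, eq_zero_of_mem_of_degreeOf_lt hmin hr'P hr's hr', add_zero]
    exact dvd_mul_left f q
  exact (hf.dvd_or_dvd hfIr).resolve_left fun hfI =>
    hIP (P.mem_of_dvd (hf.dvd_of_dvd_pow hfI) hfP)

/-- If `P` is a prime differential ideal containing an irreducible `f` of minimal rank
with nonzero separant, then `P = [f] : s_f^∞`. -/
theorem stmt8 {K : Type*} [Field K] (δ : Derivation ℤ K K)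
    (D : Derivation ℤ (MvPolynomial ℕ K) (MvPolynomial ℕ K))
    (hDX : ∀ n : ℕ, D (X n) = X (n + 1))
    (hDC : ∀ a : K, D (C a) = C (δ a))
    (P : Ideal (MvPolynomial ℕ K)) (hPprime : P.IsPrime)
    (hPdiff : ∀ h ∈ P, D h ∈ P)
    (f : MvPolynomial ℕ K) (hfP : f ∈ P) (hf : Irreducible f)
    (hmin : ∀ g ∈ P, g ≠ 0 → toLex (rankOf f) ≤ toLex (rankOf g))
    (hs : sep f ≠ 0) :
    P = saturation (diffIdeal D f) (sep f) := by
  have hD : IsDiffPolyDerivation δ D := ⟨hDX, hDC⟩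
  have hle := diffIdeal_le hPdiff hfP
  have hd : 0 < degreeOf (ordOf f) f := Nat.pos_of_ne_zero fun h0 =>
    hs (pderiv_eq_zero_of_notMem_vars fun hv => mem_vars_iff_degreeOf_ne_zero.1 hv h0)
  have hsep : sep f ∉ P := fun hsP => hs <| eq_zero_of_mem_of_degreeOf_lt hmin hsP
    (pderiv_mem_supported _ (mem_supported_Iic_ordOf f)) (degreeOf_pderiv_lt hd)
  refine le_antisymm (fun h hh => ?_) (saturation_le_of_isPrime hle hPprime hsep)
  obtain ⟨m, r, hr, hmem⟩ := hD.exists_pow_pderiv_mul_sub_mem_diffIdeal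
    (mem_supported_Iic_ordOf f) (ordOf h)
    (supported_mono (Iic_subset_Iic.2 le_add_self) (mem_supported_Iic_ordOf h))
  have hrP : r ∈ P := by
    simpa using P.sub_mem (P.mul_mem_left (pderiv (ordOf f) f ^ m) hh) (hle hmem)
  obtain ⟨w, rfl⟩ := dvd_of_mem_of_mem_supported_Iic_ordOf hfP hf.prime hmin hd hrP hr
  exact ⟨m, by simpa [sep] using add_mem hmem (Ideal.mul_mem_right w _ (mem_diffIdeal_self D f))⟩
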